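/- Define S_{k,l} ⊆ S_{k+l} as the set of permutations whose cycle decomposition contains at most one element of {k+1,…,k+l} in each cycle. For every σ ∈ S_{k+l} there exists τ ∈ S_l (acting via the inclusion ρ_k : S_l → S_{k+l} permuting {k+1,…,k+l}) such that σ∘ρ_k(τ^{-1}) ∈ S_{k,l}. Moreover, σ∘ρ_k(τ^{-1}) has the maximal number of cycles among all elements in the orbit {σ∘ρ_k(τ') : τ' ∈ S_l}. -/

import Mathlib

/-!
Take `τ₀ ∈ S_l` for which `σ ∘ ρ_k(τ₀)` has the most cycles; `τ = τ₀⁻¹` works. Cycles of a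
permutation are the classes of the same-cycle relation. Right multiplication by a
transposition `(x y)` with `x, y` in one cycle only moves points within cycles, so the new
cycle relation refines the old one and the cycle count cannot drop; since the sign, which is
`(-1)^(n + c)` for `c` cycles on `n` points, flips, the count goes up. If two of the last `l`
letters shared a cycle of `σ ∘ ρ_k(τ₀)`, the transposition exchanging them would be `ρ_k` of a
transposition in `S_l`, contradicting maximality.
-/

/-- The identification of `Fin l` with the last `l` letters `{k,…,k+l-1}` of `Fin (k+l)`. -/
def lastLetters (k l : ℕ) : Fin l ≃ {x : Fin (k + l) // k ≤ (x : ℕ)} where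
  toFun i := ⟨⟨k + (i : ℕ), by omega⟩, by simp⟩
  invFun x := ⟨(x : Fin (k + l)) - k, by have := ((x : Fin (k + l))).isLt; have := x.2; omega⟩
  left_inv i := by ext; simp
  right_inv x := by
    ext
    have := x.2
    simp
    omega

/-- The inclusion `ρ_k : S_l → S_{k+l}` acting on the last `l` letters. -/
def incl (k l : ℕ) (τ : Equiv.Perm (Fin l)) : Equiv.Perm (Fin (k + l)) :=
  τ.extendDomain (lastLetters k l)

/-- `S_{k,l}`: permutations of `Fin (k+l)` having at most one of the last `l` letters in
each cycle. -/
def Skl (k l : ℕ) : Set (Equiv.Perm (Fin (k + l))) :=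
  {σ | ∀ x y : Fin (k + l), k ≤ (x : ℕ) → k ≤ (y : ℕ) → σ.SameCycle x y → x = y}

/-- The total number of cycles of a permutation (counting fixed points as 1-cycles). -/
noncomputable def numCycles {m : ℕ} (σ : Equiv.Perm (Fin m)) : ℕ :=
  σ.cycleType.card + (Finset.univ.filter fun x : Fin m => σ x = x).card

open Finset

namespace Equiv.Perm

variable {α : Type*}

theorem extendDomain_swap {β : Type*} [DecidableEq α] [DecidableEq β] {p : β → Prop}
    [DecidablePred p] (f : α ≃ Subtype p) (a b : α) :
    (swap a b).extendDomain f = swap (f a : β) (f b : β) := by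
  ext x
  by_cases hx : p x
  · obtain ⟨c, hc⟩ := f.surjective ⟨x, hx⟩
    have hinj : Function.Injective fun c => (f c : β) := Subtype.val_injective.comp f.injective
    rw [show x = f c from congrArg Subtype.val hc.symm, extendDomain_apply_image,
      hinj.swap_apply]
  · rw [extendDomain_apply_not_subtype _ _ hx, swap_apply_of_ne_of_ne]
    exacts [fun h => hx (h ▸ (f a).2), fun h => hx (h ▸ (f b).2)]

theorem SameCycle.of_forall_sameCycle_apply [Finite α] {ρ π : Perm α}
    (h : ∀ a, ρ.SameCycle a (π a)) {a b : α} (hab : π.SameCycle a b) : ρ.SameCycle a b := by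
  have hpow (n : ℕ) : ρ.SameCycle a ((π ^ n) a) := by
    induction n with
    | zero => rfl
    | succ n ih => rw [pow_succ', mul_apply]; exact ih.trans (h _)
  obtain ⟨n, -, rfl⟩ := hab.exists_nat_pow_eq
  exact hpow n

theorem SameCycle.sameCycle_mul_swap_apply {ρ : Perm α} [DecidableEq α] {x y : α}
    (hxy : ρ.SameCycle x y) (a : α) : ρ.SameCycle a ((ρ * swap x y) a) := by
  rw [mul_apply, sameCycle_apply_right, swap_apply_def]
  split_ifs with hx hy
  · exact hx ▸ hxy
  · exact hy ▸ hxy.symm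
  · rfl

variable [Fintype α] [DecidableEq α]

def cycleFactorOrFixedPoint (ρ : Perm α) (x : α) :
    ρ.cycleFactorsFinset ⊕ {y : α // ρ y = y} :=
  if h : ρ x = x then .inr ⟨x, h⟩
  else .inl ⟨ρ.cycleOf x, cycleOf_mem_cycleFactorsFinset_iff.2 (mem_support.2 h)⟩

theorem cycleFactorOrFixedPoint_eq_iff (ρ : Perm α) {a b : α} :
    cycleFactorOrFixedPoint ρ a = cycleFactorOrFixedPoint ρ b ↔ ρ.SameCycle a b := by
  by_cases ha : ρ a = a <;> by_cases hb : ρ b = b <;>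
    simp only [cycleFactorOrFixedPoint, ha, hb, dite_true, dite_false, reduceCtorEq,
      false_iff, Sum.inl.injEq, Sum.inr.injEq, Subtype.mk.injEq]
  · exact ⟨fun h => h ▸ SameCycle.refl ρ a, fun h => h.eq_of_left ha⟩
  · exact fun h => hb (h.apply_eq_self_iff.1 ha)
  · exact fun h => ha (h.apply_eq_self_iff.2 hb)
  · exact (sameCycle_iff_cycleOf_eq_of_mem_support (mem_support.2 ha) (mem_support.2 hb)).symm

theorem cycleFactorOrFixedPoint_surjective (ρ : Perm α) :
    Function.Surjective (cycleFactorOrFixedPoint ρ) := by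
  rintro (⟨c, hc⟩ | ⟨y, hy⟩)
  · obtain ⟨a, ha, -⟩ := (mem_cycleFactorsFinset_iff.1 hc).1
    have hρa : ρ a ≠ a := by rwa [← (mem_cycleFactorsFinset_iff.1 hc).2 a (mem_support.2 ha)]
    refine ⟨a, ?_⟩
    simp only [cycleFactorOrFixedPoint, hρa, dite_false,
      ← cycle_is_cycleOf (mem_support.2 ha) hc]
  · exact ⟨y, by simp only [cycleFactorOrFixedPoint, hy, dite_true]⟩

noncomputable def quotientSameCycleEquiv (ρ : Perm α) :
    Quotient (SameCycle.setoid ρ) ≃ ρ.cycleFactorsFinset ⊕ {y : α // ρ y = y} :=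
  Equiv.ofBijective
    (Quotient.lift (cycleFactorOrFixedPoint ρ) fun _ _ h =>
      (cycleFactorOrFixedPoint_eq_iff ρ).2 h)
    ⟨fun q₁ q₂ => Quotient.inductionOn₂ q₁ q₂ fun _ _ h =>
        Quotient.sound ((cycleFactorOrFixedPoint_eq_iff ρ).1 h),
      fun c => let ⟨a, ha⟩ := cycleFactorOrFixedPoint_surjective ρ c; ⟨⟦a⟧, ha⟩⟩

theorem card_quotient_sameCycle (ρ : Perm α) :
    Nat.card (Quotient (SameCycle.setoid ρ)) =
      Multiset.card ρ.cycleType + #{x | ρ x = x} := by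
  rw [Nat.card_congr (quotientSameCycleEquiv ρ), Nat.card_sum, Nat.card_eq_fintype_card,
    Nat.card_eq_fintype_card, Fintype.card_coe, Fintype.card_subtype, cycleType_def,
    Multiset.card_map]
  rfl

theorem sign_eq_neg_one_pow_card_quotient_sameCycle (ρ : Perm α) :
    sign ρ = (-1) ^ (Fintype.card α + Nat.card (Quotient (SameCycle.setoid ρ))) := by
  have hfix : #{x | ρ x = x} = Fintype.card α - ρ.cycleType.sum := by
    rw [← card_fixedPoints, Fintype.card_subtype]
    rfl
  rw [sign_of_cycleType, card_quotient_sameCycle, hfix,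
    show Fintype.card α + (Multiset.card ρ.cycleType + (Fintype.card α - ρ.cycleType.sum)) =
      ρ.cycleType.sum + Multiset.card ρ.cycleType + 2 * (Fintype.card α - ρ.cycleType.sum) by
      have := sum_cycleType_le ρ; omega]
  simp [pow_add, pow_mul]

theorem card_quotient_sameCycle_lt_mul_swap {ρ : Perm α} {x y : α} (hne : x ≠ y)
    (hxy : ρ.SameCycle x y) :
    Nat.card (Quotient (SameCycle.setoid ρ)) <
      Nat.card (Quotient (SameCycle.setoid (ρ * swap x y))) := by
  have hle : Nat.card (Quotient (SameCycle.setoid ρ)) ≤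
      Nat.card (Quotient (SameCycle.setoid (ρ * swap x y))) :=
    Nat.card_le_card_of_surjective
      (Quotient.map' id fun _ _ => SameCycle.of_forall_sameCycle_apply
        hxy.sameCycle_mul_swap_apply)
      (fun q => q.inductionOn fun a => ⟨⟦a⟧, rfl⟩)
  refine hle.lt_of_ne fun heq => ?_
  have hsign : sign (ρ * swap x y) = sign ρ * -1 := by rw [map_mul, sign_swap hne]
  rw [sign_eq_neg_one_pow_card_quotient_sameCycle (ρ * swap x y),
    sign_eq_neg_one_pow_card_quotient_sameCycle ρ, ← heq, left_eq_mul] at hsign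
  exact absurd hsign (by decide)

end Equiv.Perm

open Equiv Equiv.Perm

theorem numCycles_lt_mul_swap {m : ℕ} (ρ : Perm (Fin m)) {x y : Fin m} (hne : x ≠ y)
    (hxy : ρ.SameCycle x y) : numCycles ρ < numCycles (ρ * swap x y) := by
  simpa only [numCycles, ← card_quotient_sameCycle] using
    card_quotient_sameCycle_lt_mul_swap hne hxy

section

variable (k l : ℕ)

theorem incl_mul (τ τ' : Perm (Fin l)) : incl k l τ * incl k l τ' = incl k l (τ * τ') :=
  extendDomain_mul _ _ _

theorem incl_inv (τ : Perm (Fin l)) : (incl k l τ)⁻¹ = incl k l τ⁻¹ :=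
  extendDomain_inv _ _

theorem incl_swap (i j : Fin l) :
    incl k l (swap i j) = swap (lastLetters k l i : Fin (k + l)) (lastLetters k l j) :=
  extendDomain_swap _ _ _

theorem mem_Skl_of_forall_numCycles_mul_incl_le {π : Perm (Fin (k + l))}
    (h : ∀ τ, numCycles (π * incl k l τ) ≤ numCycles π) : π ∈ Skl k l := by
  intro x y hx hy hxy
  by_contra hne
  obtain ⟨i, hi⟩ := (lastLetters k l).surjective ⟨x, hx⟩
  obtain ⟨j, hj⟩ := (lastLetters k l).surjective ⟨y, hy⟩
  have hlt := numCycles_lt_mul_swap π hne hxy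
  rw [show swap x y = incl k l (swap i j) by rw [incl_swap, hi, hj]] at hlt
  exact (h _).not_gt hlt

end

theorem stmt13 (k l : ℕ) (σ : Equiv.Perm (Fin (k + l))) :
    ∃ τ : Equiv.Perm (Fin l),
      σ * (incl k l τ)⁻¹ ∈ Skl k l ∧
      ∀ τ' : Equiv.Perm (Fin l),
        numCycles (σ * incl k l τ') ≤ numCycles (σ * (incl k l τ)⁻¹) := by
  obtain ⟨τ₀, hmax⟩ := Finite.exists_max fun τ => numCycles (σ * incl k l τ)
  refine ⟨τ₀⁻¹, ?_, ?_⟩ <;> rw [incl_inv, inv_inv]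
  · exact mem_Skl_of_forall_numCycles_mul_incl_le k l fun τ => by
      rw [mul_assoc, incl_mul]
      exact hmax _
  · exact hmax
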